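/- Hamel coefficients of the falling rolling disc: On the open set of ℝ⁵ with coordinates (φ, θ, ψ, x, y) where sin θ ≠ 0, let Ψ be the 5×5 matrix with rows (sin θ, 0, 0, 0, 0), (0, 1, 0, 0, 0), (cos θ, 0, 1, 0, 0), (0, 0, r cos φ, 1, 0), (0, 0, r sin φ, 0, 1), where r > 0 is a constant. Then Ψ is invertible with inverse Φ having rows (csc θ, 0, 0, 0, 0), (0, 1, 0, 0, 0), (−cot θ, 0, 1, 0, 0), (r cos φ cot θ, 0, −r cos φ, 1, 0), (r sin φ cot θ, 0, −r sin φ, 0, 1), and the nonzero Hamel coefficients γ^s_{pq} = (∂Ψ^s_i/∂q^j − ∂Ψ^s_j/∂q^i) Φ^i_p Φ^j_q are exactly γ¹₂₁ = −cot θ = −γ¹₁₂, γ³₂₁ = 1 = −γ³₁₂, γ⁴₁₃ = r sin φ csc θ = −γ⁴₃₁, and γ⁵₁₃ = −r cos φ csc θ = −γ⁵₃₁. -/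

import Mathlib

open Matrix Real

noncomputable section

/-- Partial derivative of `f : ℝ⁵ → ℝ` at `x` in the `j`-th coordinate direction. -/
def pder (f : (Fin 5 → ℝ) → ℝ) (x : Fin 5 → ℝ) (j : Fin 5) : ℝ :=
  fderiv ℝ f x (Pi.single j 1)

/-- Hamel coefficients `γ^s_{pq}(x) = (∂Ψ^s_i/∂x^j − ∂Ψ^s_j/∂x^i) Φ^i_p Φ^j_q`. -/
def hamel (Ψ Φ : (Fin 5 → ℝ) → Matrix (Fin 5) (Fin 5) ℝ)
    (x : Fin 5 → ℝ) (s p r : Fin 5) : ℝ :=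
  ∑ i, ∑ j, (pder (fun y => Ψ y s i) x j - pder (fun y => Ψ y s j) x i) * Φ x i p * Φ x j r

/-- The quasi-velocity transformation of the falling rolling disc,
in coordinates `q = (φ, θ, ψ, x, y)`. -/
def ΨD (r : ℝ) (q : Fin 5 → ℝ) : Matrix (Fin 5) (Fin 5) ℝ :=
  !![sin (q 1), 0, 0, 0, 0;
     0, 1, 0, 0, 0;
     cos (q 1), 0, 1, 0, 0;
     0, 0, r * cos (q 0), 1, 0;
     0, 0, r * sin (q 0), 0, 1]

/-- The claimed inverse transformation (`csc θ = 1/sin θ`, `cot θ = cos θ/sin θ`). -/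
def ΦD (r : ℝ) (q : Fin 5 → ℝ) : Matrix (Fin 5) (Fin 5) ℝ :=
  !![1 / sin (q 1), 0, 0, 0, 0;
     0, 1, 0, 0, 0;
     -(cos (q 1) / sin (q 1)), 0, 1, 0, 0;
     r * cos (q 0) * (cos (q 1) / sin (q 1)), 0, -(r * cos (q 0)), 1, 0;
     r * sin (q 0) * (cos (q 1) / sin (q 1)), 0, -(r * sin (q 0)), 0, 1]

/-! Each row `s` of `ΨD` is constant except for at most one entry `f (q k)` in some column `c`,
so the only surviving derivative in the curl is `∂_k Ψ^s_c` and
`γ^s_{pw} = f'(q k) (Φ^c_p Φ^k_w − Φ^k_p Φ^c_w)`. The coefficients are then `2 × 2` minors of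
`ΦD`, in which the `cot θ` entries cancel. -/

lemma pder_comp_apply {f : ℝ → ℝ} {x : Fin 5 → ℝ} {k : Fin 5}
    (hf : DifferentiableAt ℝ f (x k)) (j : Fin 5) :
    pder (fun y => f (y k)) x j = if j = k then deriv f (x k) else 0 := by
  have hderiv : HasFDerivAt (fun y : Fin 5 → ℝ => f (y k))
      ((fderiv ℝ f (x k)).comp (ContinuousLinearMap.proj k)) x :=
    hf.hasFDerivAt.comp x (hasFDerivAt_apply k x)
  simp [pder, hderiv.fderiv, Pi.single_apply, eq_comm]

lemma hamel_of_row_eq_update {Ψ : (Fin 5 → ℝ) → Matrix (Fin 5) (Fin 5) ℝ}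
    (Φ : (Fin 5 → ℝ) → Matrix (Fin 5) (Fin 5) ℝ) {x : Fin 5 → ℝ} {s c k : Fin 5}
    {f : ℝ → ℝ} (a : Fin 5 → ℝ) (hΨ : ∀ y, Ψ y s = Function.update a c (f (y k)))
    (hf : DifferentiableAt ℝ f (x k)) (p w : Fin 5) :
    hamel Ψ Φ x s p w = deriv f (x k) * (Φ x c p * Φ x k w - Φ x k p * Φ x c w) := by
  have hpder : ∀ i j, pder (fun y => Ψ y s i) x j =
      if i = c ∧ j = k then deriv f (x k) else 0 := by
    intro i j
    by_cases hic : i = c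
    · subst hic
      simp [hΨ, pder_comp_apply hf]
    · simp [hΨ, hic, pder]
  simp only [hamel, hpder, ite_and, sub_mul, ite_mul, zero_mul, Finset.sum_sub_distrib,
    Finset.sum_ite_irrel, Finset.sum_ite_eq', Finset.mem_univ, if_true, Finset.sum_const_zero]
  ring

lemma ΨD_mul_ΦD (r : ℝ) (q : Fin 5 → ℝ) (hq : sin (q 1) ≠ 0) : ΨD r q * ΦD r q = 1 := by
  ext i j
  fin_cases i <;> fin_cases j <;>
    simp [ΨD, ΦD, Matrix.mul_apply, Fin.sum_univ_five, hq, div_eq_mul_inv]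

lemma ΦD_mul_ΨD (r : ℝ) (q : Fin 5 → ℝ) (hq : sin (q 1) ≠ 0) : ΦD r q * ΨD r q = 1 :=
  mul_eq_one_comm.mp (ΨD_mul_ΦD r q hq)

section

variable (r : ℝ) (Φ : (Fin 5 → ℝ) → Matrix (Fin 5) (Fin 5) ℝ) (q : Fin 5 → ℝ) (p w : Fin 5)

lemma hamel_ΨD_zero :
    hamel (ΨD r) Φ q 0 p w = cos (q 1) * (Φ q 0 p * Φ q 1 w - Φ q 1 p * Φ q 0 w) := by
  simpa using hamel_of_row_eq_update Φ (c := 0) (k := 1) (f := sin) 0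
    (fun y => by ext i; fin_cases i <;> simp [ΨD]) differentiable_sin.differentiableAt p w

lemma hamel_ΨD_one : hamel (ΨD r) Φ q 1 p w = 0 := by
  simpa using hamel_of_row_eq_update Φ (c := 1) (k := 0) (f := fun _ => 1) 0
    (fun y => by ext i; fin_cases i <;> simp [ΨD]) (differentiableAt_const _) p w

lemma hamel_ΨD_two :
    hamel (ΨD r) Φ q 2 p w = -sin (q 1) * (Φ q 0 p * Φ q 1 w - Φ q 1 p * Φ q 0 w) := by
  simpa using hamel_of_row_eq_update Φ (c := 0) (k := 1) (f := cos) (Pi.single 2 1)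
    (fun y => by ext i; fin_cases i <;> simp [ΨD]) differentiable_cos.differentiableAt p w

lemma hamel_ΨD_three :
    hamel (ΨD r) Φ q 3 p w = -(r * sin (q 0)) * (Φ q 2 p * Φ q 0 w - Φ q 0 p * Φ q 2 w) := by
  simpa using hamel_of_row_eq_update Φ (c := 2) (k := 0) (f := fun t => r * cos t)
    (Pi.single 3 1) (fun y => by ext i; fin_cases i <;> simp [ΨD]) (by fun_prop) p w

lemma hamel_ΨD_four :
    hamel (ΨD r) Φ q 4 p w = r * cos (q 0) * (Φ q 2 p * Φ q 0 w - Φ q 0 p * Φ q 2 w) := by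
  simpa using hamel_of_row_eq_update Φ (c := 2) (k := 0) (f := fun t => r * sin t)
    (Pi.single 4 1) (fun y => by ext i; fin_cases i <;> simp [ΨD]) (by fun_prop) p w

end

-- Indices are 0-based: `γ¹₂₁` is `hamel (ΨD r) (ΦD r) q 0 1 0`.
theorem falling_rolling_disc_hamel_coefficients_general (r : ℝ) :
    ∀ q : Fin 5 → ℝ, sin (q 1) ≠ 0 →
      (ΨD r q * ΦD r q = 1 ∧ ΦD r q * ΨD r q = 1) ∧
      (∀ s p w : Fin 5,
        hamel (ΨD r) (ΦD r) q s p w =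
          if s = 0 ∧ p = 1 ∧ w = 0 then -(cos (q 1) / sin (q 1))
          else if s = 0 ∧ p = 0 ∧ w = 1 then cos (q 1) / sin (q 1)
          else if s = 2 ∧ p = 1 ∧ w = 0 then 1
          else if s = 2 ∧ p = 0 ∧ w = 1 then -1
          else if s = 3 ∧ p = 0 ∧ w = 2 then r * sin (q 0) * (1 / sin (q 1))
          else if s = 3 ∧ p = 2 ∧ w = 0 then -(r * sin (q 0) * (1 / sin (q 1)))
          else if s = 4 ∧ p = 0 ∧ w = 2 then -(r * cos (q 0) * (1 / sin (q 1)))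
          else if s = 4 ∧ p = 2 ∧ w = 0 then r * cos (q 0) * (1 / sin (q 1))
          else 0) := by
  intro q hq
  refine ⟨⟨ΨD_mul_ΦD r q hq, ΦD_mul_ΨD r q hq⟩, fun s p w => ?_⟩
  fin_cases s <;> simp only [Fin.zero_eta, Fin.mk_one, Fin.reduceFinMk, hamel_ΨD_zero,
    hamel_ΨD_one, hamel_ΨD_two, hamel_ΨD_three, hamel_ΨD_four]
  all_goals
    fin_cases p <;> fin_cases w <;> simp [ΦD, hq, div_eq_mul_inv, mul_comm, mul_left_comm]

/-- **Hamel coefficients of the falling rolling disc.**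
On the set where `sin θ ≠ 0`, `ΦD` is the pointwise inverse of `ΨD`, and the nonzero
Hamel coefficients are exactly `γ¹₂₁ = −cot θ = −γ¹₁₂`, `γ³₂₁ = 1 = −γ³₁₂`,
`γ⁴₁₃ = r sin φ csc θ = −γ⁴₃₁`, `γ⁵₁₃ = −r cos φ csc θ = −γ⁵₃₁`
(indices here are 0-based: e.g. `γ¹₂₁` is `hamel (ΨD r) (ΦD r) q 0 1 0`). -/
theorem falling_rolling_disc_hamel_coefficients (r : ℝ) (hr : 0 < r) :
    ∀ q : Fin 5 → ℝ, sin (q 1) ≠ 0 →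
      (ΨD r q * ΦD r q = 1 ∧ ΦD r q * ΨD r q = 1) ∧
      (∀ s p w : Fin 5,
        hamel (ΨD r) (ΦD r) q s p w =
          if s = 0 ∧ p = 1 ∧ w = 0 then -(cos (q 1) / sin (q 1))
          else if s = 0 ∧ p = 0 ∧ w = 1 then cos (q 1) / sin (q 1)
          else if s = 2 ∧ p = 1 ∧ w = 0 then 1
          else if s = 2 ∧ p = 0 ∧ w = 1 then -1
          else if s = 3 ∧ p = 0 ∧ w = 2 then r * sin (q 0) * (1 / sin (q 1))
          else if s = 3 ∧ p = 2 ∧ w = 0 then -(r * sin (q 0) * (1 / sin (q 1)))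
          else if s = 4 ∧ p = 0 ∧ w = 2 then -(r * cos (q 0) * (1 / sin (q 1)))
          else if s = 4 ∧ p = 2 ∧ w = 0 then r * cos (q 0) * (1 / sin (q 1))
          else 0) :=
  falling_rolling_disc_hamel_coefficients_general r

end
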